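/- arXiv:1910.05957 — 5 statements merged into one kernel-verified Lean document; each statement's English description precedes it below -/
import Mathlib

section
/- Let Ω be a self-adjoint multiplication operator by a real-valued measurable function ω on H = L²(X,μ), and let g ∈ H (square-integrable). Then the operator H on ℂ ⊕ H with domain ℂ ⊕ D(Ω) acting by H(x, ξ) = (ε·x + ⟨g, ξ⟩, x·g + Ω ξ) is self-adjoint. -/
open MeasureTheory Complex InnerProductSpace

noncomputable section

variable {H : Type*} [NormedAddCommGroup H] [InnerProductSpace ℂ H]

/-- The Friedrichs-Lee operator on `ℂ ⊕ H` (realised as the Hilbert direct sum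
`WithLp 2 (ℂ × H)`), with domain `ℂ ⊕ D(Ω)`, acting by
`(x, ξ) ↦ (ε x + ⟪g, ξ⟫, x • g + Ω ξ)`. -/
def FriedrichsLee (Ω : H →ₗ.[ℂ] H) (ε : ℝ) (g : H) :
    WithLp 2 (ℂ × H) →ₗ.[ℂ] WithLp 2 (ℂ × H) :=
  let e := WithLp.linearEquiv 2 ℂ (ℂ × H)
  let D : Submodule ℂ (WithLp 2 (ℂ × H)) :=
    Submodule.comap ((LinearMap.snd ℂ ℂ H).comp e.toLinearMap) Ω.domain
  let pfst : D →ₗ[ℂ] ℂ := (LinearMap.fst ℂ ℂ H).comp (e.toLinearMap.comp D.subtype)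
  let psnd : D →ₗ[ℂ] H := (LinearMap.snd ℂ ℂ H).comp (e.toLinearMap.comp D.subtype)
  let toΩdom : D →ₗ[ℂ] Ω.domain := LinearMap.codRestrict Ω.domain psnd fun p => p.2
  { domain := D
    toFun := e.symm.toLinearMap.comp
      ((((ε : ℂ) • pfst + (innerSL ℂ g).toLinearMap.comp psnd).prod
        ((LinearMap.toSpanSingleton ℂ H g).comp pfst + Ω.toFun.comp toΩdom))) }

/-! The multiplication operator `Ω` by a real function is symmetric. If `⟪ζ, ξ⟫ = ⟪η, Ω ξ⟫` for
all `ξ ∈ D(Ω)`, testing against `ξ = 1_{|ω| ≤ n} (ζ - ω η)` gives `‖ξ‖² = 0`, so `ζ = ω η` on every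
sublevel set of `|ω|`, hence almost everywhere: `Ω` is self-adjoint, and the case `η = 0` shows
that `D(Ω)` is dense. The Friedrichs–Lee operator is symmetric by direct computation, and testing
a vector `u` of the domain of its adjoint against the vectors `(0, ξ)` shows that `u₂` lies in the
domain of `Ω† = Ω`. -/

namespace LinearPMap

variable {𝕜 E : Type*} [RCLike 𝕜] [NormedAddCommGroup E] [InnerProductSpace 𝕜 E] [CompleteSpace E]
  {A : E →ₗ.[𝕜] E}

theorem _root_.IsSelfAdjoint.isFormalAdjoint_self (hA : IsSelfAdjoint A) : A.IsFormalAdjoint A := by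
  have h := adjoint_isFormalAdjoint hA.dense_domain (T := A)
  rwa [isSelfAdjoint_def.mp hA] at h

theorem isSelfAdjoint_of_isFormalAdjoint_self (hA : Dense (A.domain : Set E))
    (hsym : A.IsFormalAdjoint A)
    (hmax : ∀ y : E, (∃ w : E, ∀ x : A.domain, ⟪w, x⟫_𝕜 = ⟪y, A x⟫_𝕜) → y ∈ A.domain) :
    IsSelfAdjoint A := by
  have hle : A ≤ A† := hsym.le_adjoint hA
  refine (eq_of_le_of_domain_eq hle (le_antisymm hle.1 fun y hy => hmax y ?_)).symm
  exact ⟨A† ⟨y, hy⟩, adjoint_isFormalAdjoint hA ⟨y, hy⟩⟩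

end LinearPMap

namespace FriedrichsLee

variable (Ω : H →ₗ.[ℂ] H) (ε : ℝ) (g : H)

theorem mem_domain_iff (u : WithLp 2 (ℂ × H)) :
    u ∈ (FriedrichsLee Ω ε g).domain ↔ u.snd ∈ Ω.domain := Iff.rfl

theorem apply (u : (FriedrichsLee Ω ε g).domain) :
    FriedrichsLee Ω ε g u = WithLp.toLp 2
      ((ε : ℂ) * (u : WithLp 2 (ℂ × H)).fst + ⟪g, (u : WithLp 2 (ℂ × H)).snd⟫_ℂ,
        (u : WithLp 2 (ℂ × H)).fst • g + Ω ⟨(u : WithLp 2 (ℂ × H)).snd, u.2⟩) := rfl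

variable {Ω}

theorem dense_domain (hΩ : Dense (Ω.domain : Set H)) :
    Dense ((FriedrichsLee Ω ε g).domain : Set (WithLp 2 (ℂ × H))) :=
  hΩ.preimage (isOpenMap_snd.comp (WithLp.homeomorphProd 2 ℂ H).isOpenMap)

theorem isFormalAdjoint_self (hΩ : Ω.IsFormalAdjoint Ω) :
    (FriedrichsLee Ω ε g).IsFormalAdjoint (FriedrichsLee Ω ε g) := by
  intro u v
  have hΩuv : ⟪Ω ⟨(u : WithLp 2 (ℂ × H)).snd, u.2⟩, (v : WithLp 2 (ℂ × H)).snd⟫_ℂ =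
      ⟪(u : WithLp 2 (ℂ × H)).snd, Ω ⟨(v : WithLp 2 (ℂ × H)).snd, v.2⟩⟫_ℂ :=
    hΩ ⟨_, u.2⟩ ⟨_, v.2⟩
  simp only [apply, WithLp.prod_inner_apply, WithLp.ofLp_fst, WithLp.ofLp_snd, inner_add_left,
    inner_add_right, inner_smul_left, inner_smul_right, RCLike.inner_apply, map_add, map_mul,
    conj_ofReal, inner_conj_symm]
  linear_combination hΩuv

theorem _root_.IsSelfAdjoint.friedrichsLee [CompleteSpace H] (hΩ : IsSelfAdjoint Ω) :
    IsSelfAdjoint (FriedrichsLee Ω ε g) := by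
  refine LinearPMap.isSelfAdjoint_of_isFormalAdjoint_self (dense_domain ε g hΩ.dense_domain)
    (isFormalAdjoint_self ε g hΩ.isFormalAdjoint_self) fun u ⟨w, hw⟩ => ?_
  rw [mem_domain_iff, ← LinearPMap.isSelfAdjoint_def.mp hΩ]
  refine LinearPMap.mem_adjoint_domain_of_exists _ ⟨w.snd - u.fst • g, fun ξ => ?_⟩
  have h := hw ⟨WithLp.toLp 2 (0, ξ), ξ.2⟩
  simp only [apply, WithLp.prod_inner_apply, WithLp.ofLp_fst, WithLp.ofLp_snd, WithLp.toLp_fst,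
    WithLp.toLp_snd, RCLike.inner_apply, mul_zero, zero_mul, zero_add, zero_smul] at h
  rw [inner_sub_left, inner_smul_left]
  linear_combination h

end FriedrichsLee

section Multiplication

variable {X : Type*} [MeasurableSpace X] {μ : Measure X} {ω : X → ℝ}

structure IsMultiplicationOperator (ω : X → ℝ) (Ω : Lp ℂ 2 μ →ₗ.[ℂ] Lp ℂ 2 μ) : Prop where
  mem_domain_iff : ∀ f : Lp ℂ 2 μ, f ∈ Ω.domain ↔ MemLp (fun x => (ω x : ℂ) * f x) 2 μ
  apply_ae_eq : ∀ f : Ω.domain, (Ω f : Lp ℂ 2 μ) =ᵐ[μ] fun x => (ω x : ℂ) * (f : Lp ℂ 2 μ) x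

theorem memLp_mul_indicator_abs_le (hω : Measurable ω) {n : ℝ} {f : X → ℂ}
    (hf : MemLp ({x | |ω x| ≤ n}.indicator f) 2 μ) :
    MemLp (fun x => (ω x : ℂ) * {x | |ω x| ≤ n}.indicator f x) 2 μ := by
  refine MemLp.of_le_mul (c := n) hf
    ((measurable_ofReal.comp hω).aestronglyMeasurable.mul hf.1) (.of_forall fun x => ?_)
  by_cases hx : |ω x| ≤ n
  · rw [norm_mul, norm_real, Real.norm_eq_abs]
    gcongr
  · simp [Set.indicator_of_notMem (s := {x | |ω x| ≤ n}) hx]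

theorem ae_eq_zero_of_forall_indicator_abs_le {E : Type*} [Zero E] {f : X → E}
    (h : ∀ n : ℕ, {x | |ω x| ≤ n}.indicator f =ᵐ[μ] 0) : f =ᵐ[μ] 0 := by
  filter_upwards [ae_all_iff.2 h] with x hx
  obtain ⟨n, hn⟩ := exists_nat_ge |ω x|
  simpa [Set.indicator_of_mem (s := {x | |ω x| ≤ (n : ℝ)}) hn] using hx n

namespace IsMultiplicationOperator

variable {Ω : Lp ℂ 2 μ →ₗ.[ℂ] Lp ℂ 2 μ} (hΩ : IsMultiplicationOperator ω Ω)
include hΩ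

theorem isFormalAdjoint_self : Ω.IsFormalAdjoint Ω := fun f h => by
  rw [L2.inner_def, L2.inner_def]
  refine integral_congr_ae ?_
  filter_upwards [hΩ.apply_ae_eq f, hΩ.apply_ae_eq h] with x hf hh
  simp only [hf, hh, RCLike.inner_apply, map_mul, conj_ofReal]
  ring

theorem ae_eq_mul_of_inner_eq (hω : Measurable ω) {η ζ : Lp ℂ 2 μ}
    (h : ∀ ξ : Ω.domain, ⟪ζ, ξ⟫_ℂ = ⟪η, Ω ξ⟫_ℂ) : ζ =ᵐ[μ] fun x => (ω x : ℂ) * η x := by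
  refine (ae_eq_zero_of_forall_indicator_abs_le (ω := ω) fun n => ?_).mono
    fun x hx => sub_eq_zero.mp hx
  set s := {x | |ω x| ≤ (n : ℝ)}
  have hs : MeasurableSet s := measurableSet_le hω.abs measurable_const
  have hωη : MemLp (s.indicator fun x => (ω x : ℂ) * η x) 2 μ := by
    convert memLp_mul_indicator_abs_le hω ((Lp.memLp η).indicator hs) using 1
    exact funext fun x => Set.indicator_mul_right _ _ _
  have hψ : MemLp (s.indicator fun x => ζ x - (ω x : ℂ) * η x) 2 μ := by
    rw [Set.indicator_sub]
    exact ((Lp.memLp ζ).indicator hs).sub hωη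
  have hξ : hψ.toLp ∈ Ω.domain := by
    rw [hΩ.mem_domain_iff]
    refine (memLp_mul_indicator_abs_le hω hψ).ae_eq ?_
    filter_upwards [hψ.coeFn_toLp] with x hx
    rw [hx]
  have hξξ : ⟪hψ.toLp, hψ.toLp⟫_ℂ = ⟪ζ, hψ.toLp⟫_ℂ - ⟪η, Ω ⟨_, hξ⟩⟫_ℂ := by
    rw [L2.inner_def, L2.inner_def, L2.inner_def,
      ← integral_sub (L2.integrable_inner _ _) (L2.integrable_inner _ _)]
    refine integral_congr_ae ?_
    filter_upwards [hψ.coeFn_toLp, hΩ.apply_ae_eq ⟨_, hξ⟩] with x hx hΩx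
    simp only [hΩx, hx, RCLike.inner_apply]
    by_cases hxs : x ∈ s
    · simp only [Set.indicator_of_mem hxs, map_sub, map_mul, conj_ofReal]
      ring
    · simp [Set.indicator_of_notMem hxs]
  rw [h ⟨_, hξ⟩, sub_self, inner_self_eq_zero, Lp.eq_zero_iff_ae_eq_zero] at hξξ
  exact hψ.coeFn_toLp.symm.trans hξξ

theorem dense_domain (hω : Measurable ω) : Dense (Ω.domain : Set (Lp ℂ 2 μ)) := by
  rw [Submodule.dense_iff_topologicalClosure_eq_top, Submodule.topologicalClosure_eq_top_iff,
    Submodule.eq_bot_iff]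
  intro y hy
  have hy0 : ⇑y =ᵐ[μ] fun x => (ω x : ℂ) * (0 : Lp ℂ 2 μ) x :=
    hΩ.ae_eq_mul_of_inner_eq hω fun ξ => by
      rw [inner_zero_left]
      exact (Submodule.mem_orthogonal' _ _).1 hy ξ ξ.2
  refine Lp.eq_zero_iff_ae_eq_zero.2 (hy0.trans ?_)
  filter_upwards [Lp.coeFn_zero ℂ 2 μ] with x hx
  rw [hx, Pi.zero_apply, mul_zero]

theorem isSelfAdjoint (hω : Measurable ω) : IsSelfAdjoint Ω :=
  LinearPMap.isSelfAdjoint_of_isFormalAdjoint_self (hΩ.dense_domain hω) hΩ.isFormalAdjoint_self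
    fun η ⟨ζ, hζ⟩ => (hΩ.mem_domain_iff η).2 ((Lp.memLp ζ).ae_eq (hΩ.ae_eq_mul_of_inner_eq hω hζ))

end IsMultiplicationOperator

end Multiplication

theorem friedrichsLee_isSelfAdjoint_general
    {X : Type*} [MeasurableSpace X] {μ : Measure X}
    (ω : X → ℝ) (hω : Measurable ω)
    (Ω : Lp ℂ 2 μ →ₗ.[ℂ] Lp ℂ 2 μ)
    (hdom : ∀ f : Lp ℂ 2 μ, f ∈ Ω.domain ↔
      MemLp (fun x => (ω x : ℂ) * f x) 2 μ)
    (hact : ∀ (f : Lp ℂ 2 μ) (hf : f ∈ Ω.domain),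
      (Ω ⟨f, hf⟩ : Lp ℂ 2 μ) =ᵐ[μ] fun x => (ω x : ℂ) * f x)
    (ε : ℝ) (g : Lp ℂ 2 μ) :
    IsSelfAdjoint (FriedrichsLee Ω ε g) :=
  (IsMultiplicationOperator.isSelfAdjoint ⟨hdom, fun f => hact f f.2⟩ hω).friedrichsLee ε g

/-- let `Ω` be the (self-adjoint) maximal multiplication operator by a
real-valued measurable function `ω` on `H = L²(X,μ)` and `g ∈ H`. Then the
Friedrichs-Lee operator `H(x,ξ) = (ε x + ⟪g, ξ⟫, x g + Ω ξ)` on `ℂ ⊕ D(Ω)` is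
self-adjoint on `ℂ ⊕ H`. -/
theorem friedrichsLee_isSelfAdjoint
    {X : Type*} [MeasurableSpace X] {μ : Measure X} [SigmaFinite μ]
    (ω : X → ℝ) (hω : Measurable ω)
    (Ω : Lp ℂ 2 μ →ₗ.[ℂ] Lp ℂ 2 μ)
    (hdom : ∀ f : Lp ℂ 2 μ, f ∈ Ω.domain ↔
      MemLp (fun x => (ω x : ℂ) * f x) 2 μ)
    (hact : ∀ (f : Lp ℂ 2 μ) (hf : f ∈ Ω.domain),
      (Ω ⟨f, hf⟩ : Lp ℂ 2 μ) =ᵐ[μ] fun x => (ω x : ℂ) * f x)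
    (ε : ℝ) (g : Lp ℂ 2 μ) :
    IsSelfAdjoint (FriedrichsLee Ω ε g) :=
  friedrichsLee_isSelfAdjoint_general ω hω Ω hdom hact ε g

end
end

section
/- Let Ω be self-adjoint on H, ε ∈ ℝ, g ∈ H, and H_{g,ε} the Friedrichs-Lee operator on ℂ ⊕ H with H_{g,ε}(x,ξ) = (ε x + ⟨g,ξ⟩, x g + Ω ξ) on domain ℂ ⊕ D(Ω). For every z ∈ ℂ with Im z ≠ 0 such that ε − z − Σ_g(z) ≠ 0, where Σ_g(z) = ⟨g, (Ω−z)⁻¹ g⟩, the operator H_{g,ε} − z is bijective and its inverse acts as (H_{g,ε}−z)⁻¹(x,ξ) = (u, (Ω−z)⁻¹ξ − u·(Ω−z)⁻¹g) where u = (x − ⟨g, (Ω−z)⁻¹ξ⟩)/(ε − z − Σ_g(z)). -/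
open Complex InnerProductSpace

noncomputable section

local notation "⟪" x ", " y "⟫" => @inner ℂ _ _ x y

variable {H : Type*} [NormedAddCommGroup H] [InnerProductSpace ℂ H]

/-- `R` is the resolvent of `A` at `z`: it is a two-sided inverse of `A − z`. -/
def IsResolventAt {E : Type*} [NormedAddCommGroup E] [InnerProductSpace ℂ E]
    (A : E →ₗ.[ℂ] E) (z : ℂ) (R : E → E) : Prop :=
  (∀ v : E, ∃ h : R v ∈ A.domain, (A ⟨R v, h⟩ : E) - z • R v = v) ∧
  ∀ (u : E) (hu : u ∈ A.domain), R ((A ⟨u, hu⟩ : E) - z • u) = u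

/-! Writing `(H_{g,ε} − z)(u, η) = (x, ξ)` componentwise, the second equation reads
`(Ω − z) η = ξ − u g`, so `η = R ξ − u R g`; substituting this into the first one,
`(ε − z) u + ⟪g, η⟫ = x`, leaves the scalar equation `(ε − z − ⟪g, R g⟫) u = x − ⟪g, R ξ⟫`.
Since `R` is a two-sided inverse of `Ω − z`, this elimination runs in both directions, so the
resulting map is a two-sided inverse of `H_{g,ε} − z`. -/

theorem WithLp.prod_ext {p : ENNReal} {α β : Type*} {x y : WithLp p (α × β)}
    (hfst : x.fst = y.fst) (hsnd : x.snd = y.snd) : x = y :=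
  (WithLp.equiv p (α × β)).injective (Prod.ext hfst hsnd)

namespace IsResolventAt

variable {E : Type*} [NormedAddCommGroup E] [InnerProductSpace ℂ E]
  {A : E →ₗ.[ℂ] E} {z : ℂ} {R : E → E}

theorem mem_domain (hR : IsResolventAt A z R) (v : E) : R v ∈ A.domain :=
  (hR.1 v).1

theorem apply_sub_smul (hR : IsResolventAt A z R) (v : E) :
    (A ⟨R v, hR.mem_domain v⟩ : E) - z • R v = v :=
  (hR.1 v).2

theorem bijective (hR : IsResolventAt A z R) :
    Function.Bijective (fun p : A.domain => (A p : E) - z • (p : E)) := by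
  refine ⟨fun p p' hpp' => Subtype.ext ?_, fun v => ⟨⟨R v, hR.mem_domain v⟩, hR.apply_sub_smul v⟩⟩
  rw [← hR.2 p p.2, ← hR.2 p' p'.2]
  exact congrArg R hpp'

end IsResolventAt

section FriedrichsLee

variable {Ω : H →ₗ.[ℂ] H} {ε : ℝ} {g : H}

theorem friedrichsLee_apply_fst (p : (FriedrichsLee Ω ε g).domain) :
    (FriedrichsLee Ω ε g p : WithLp 2 (ℂ × H)).fst =
      (ε : ℂ) * (p : WithLp 2 (ℂ × H)).fst + ⟪g, (p : WithLp 2 (ℂ × H)).snd⟫ :=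
  rfl

theorem friedrichsLee_apply_snd (p : (FriedrichsLee Ω ε g).domain) :
    (FriedrichsLee Ω ε g p : WithLp 2 (ℂ × H)).snd =
      (p : WithLp 2 (ℂ × H)).fst • g + Ω ⟨(p : WithLp 2 (ℂ × H)).snd, p.2⟩ :=
  rfl

def friedrichsLeeResolventCoeff (ε : ℝ) (g : H) (z : ℂ) (R : H → H)
    (q : WithLp 2 (ℂ × H)) : ℂ :=
  (q.fst - ⟪g, R q.snd⟫) / ((ε : ℂ) - z - ⟪g, R g⟫)

def friedrichsLeeResolvent (ε : ℝ) (g : H) (z : ℂ) (R : H → H)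
    (q : WithLp 2 (ℂ × H)) : WithLp 2 (ℂ × H) :=
  (WithLp.equiv 2 (ℂ × H)).symm (friedrichsLeeResolventCoeff ε g z R q,
    R q.snd - friedrichsLeeResolventCoeff ε g z R q • R g)

variable {z : ℂ} {R : H → H}

theorem friedrichsLeeResolvent_mem_domain (hR : IsResolventAt Ω z R) (q : WithLp 2 (ℂ × H)) :
    friedrichsLeeResolvent ε g z R q ∈ (FriedrichsLee Ω ε g).domain :=
  Ω.domain.sub_mem (hR.mem_domain q.snd) (Ω.domain.smul_mem _ (hR.mem_domain g))

theorem friedrichsLee_sub_smul_friedrichsLeeResolvent (hR : IsResolventAt Ω z R)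
    (hne : (ε : ℂ) - z - ⟪g, R g⟫ ≠ 0) (q : WithLp 2 (ℂ × H)) :
    (FriedrichsLee Ω ε g ⟨_, friedrichsLeeResolvent_mem_domain hR q⟩ : WithLp 2 (ℂ × H)) -
      z • friedrichsLeeResolvent ε g z R q = q := by
  set u := friedrichsLeeResolventCoeff ε g z R q with hu
  refine WithLp.prod_ext ?_ ?_
  · change (ε : ℂ) * u + ⟪g, R q.snd - u • R g⟫ - z * u = q.fst
    rw [inner_sub_right, inner_smul_right, hu, friedrichsLeeResolventCoeff]
    field_simp
    ring
  · have hΩ : (Ω ⟨R q.snd - u • R g, friedrichsLeeResolvent_mem_domain hR q⟩ : H) =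
        Ω ⟨R q.snd, hR.mem_domain q.snd⟩ - u • Ω ⟨R g, hR.mem_domain g⟩ := by
      rw [← Ω.map_smul, ← Ω.map_sub]
      rfl
    change u • g + (Ω ⟨R q.snd - u • R g, _⟩ : H) - z • (R q.snd - u • R g) = q.snd
    rw [hΩ]
    linear_combination (norm := module) hR.apply_sub_smul q.snd - u • hR.apply_sub_smul g

theorem friedrichsLeeResolvent_friedrichsLee_sub_smul (hR : IsResolventAt Ω z R)
    (hne : (ε : ℂ) - z - ⟪g, R g⟫ ≠ 0) (p : WithLp 2 (ℂ × H))
    (hp : p ∈ (FriedrichsLee Ω ε g).domain) :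
    friedrichsLeeResolvent ε g z R ((FriedrichsLee Ω ε g ⟨p, hp⟩ : WithLp 2 (ℂ × H)) - z • p)
      = p := by
  set q := (FriedrichsLee Ω ε g ⟨p, hp⟩ : WithLp 2 (ℂ × H)) - z • p with hq
  have hmem : p.snd + p.fst • R g ∈ Ω.domain :=
    Ω.domain.add_mem hp (Ω.domain.smul_mem _ (hR.mem_domain g))
  have hRq : R q.snd = p.snd + p.fst • R g := by
    have hΩ : (Ω ⟨p.snd + p.fst • R g, hmem⟩ : H) =
        Ω ⟨p.snd, hp⟩ + p.fst • Ω ⟨R g, hR.mem_domain g⟩ := by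
      rw [← Ω.map_smul, ← Ω.map_add]
      rfl
    have hq_snd : q.snd = (Ω ⟨p.snd + p.fst • R g, hmem⟩ : H) - z • (p.snd + p.fst • R g) := by
      rw [hq, WithLp.sub_snd, WithLp.smul_snd, friedrichsLee_apply_snd, hΩ]
      linear_combination (norm := module) -(p.fst • hR.apply_sub_smul g)
    rw [hq_snd, hR.2]
  have hu : friedrichsLeeResolventCoeff ε g z R q = p.fst := by
    rw [friedrichsLeeResolventCoeff, div_eq_iff hne, hRq, hq, WithLp.sub_fst, WithLp.smul_fst,
      friedrichsLee_apply_fst, inner_add_right, inner_smul_right]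
    simp only [smul_eq_mul]
    ring
  refine WithLp.prod_ext hu ?_
  change R q.snd - friedrichsLeeResolventCoeff ε g z R q • R g = p.snd
  rw [hRq, hu, add_sub_cancel_right]

theorem isResolventAt_friedrichsLee (hR : IsResolventAt Ω z R)
    (hne : (ε : ℂ) - z - ⟪g, R g⟫ ≠ 0) :
    IsResolventAt (FriedrichsLee Ω ε g) z (friedrichsLeeResolvent ε g z R) :=
  ⟨fun q => ⟨friedrichsLeeResolvent_mem_domain hR q,
      friedrichsLee_sub_smul_friedrichsLeeResolvent hR hne q⟩,
    friedrichsLeeResolvent_friedrichsLee_sub_smul hR hne⟩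

end FriedrichsLee

theorem friedrichsLee_resolvent_general
    (Ω : H →ₗ.[ℂ] H) (ε : ℝ) (g : H)
    (z : ℂ) (R : H → H) (hR : IsResolventAt Ω z R)
    (hne : (ε : ℂ) - z - ⟪g, R g⟫ ≠ 0) :
    Function.Bijective (fun p : (FriedrichsLee Ω ε g).domain =>
      (FriedrichsLee Ω ε g p : WithLp 2 (ℂ × H)) - z • (p : WithLp 2 (ℂ × H))) ∧
    ∀ q : WithLp 2 (ℂ × H),
      ∃ hp : (WithLp.equiv 2 (ℂ × H)).symm
          ((q.fst - ⟪g, R q.snd⟫) / ((ε : ℂ) - z - ⟪g, R g⟫),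
            R q.snd - ((q.fst - ⟪g, R q.snd⟫) / ((ε : ℂ) - z - ⟪g, R g⟫)) • R g)
        ∈ (FriedrichsLee Ω ε g).domain,
      (FriedrichsLee Ω ε g ⟨_, hp⟩ : WithLp 2 (ℂ × H)) -
          z • ((WithLp.equiv 2 (ℂ × H)).symm
            ((q.fst - ⟪g, R q.snd⟫) / ((ε : ℂ) - z - ⟪g, R g⟫),
              R q.snd - ((q.fst - ⟪g, R q.snd⟫) / ((ε : ℂ) - z - ⟪g, R g⟫)) • R g))
        = q := by
  have hres := isResolventAt_friedrichsLee hR hne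
  exact ⟨hres.bijective, hres.1⟩

/-- for `z ∉ ℝ` with `ε − z − Σ_g(z) ≠ 0`, where
`Σ_g(z) = ⟪g, (Ω−z)⁻¹ g⟫`, the operator `H_{g,ε} − z` is bijective (as a map from its
domain) and its inverse acts by
`(x,ξ) ↦ (u, (Ω−z)⁻¹ξ − u (Ω−z)⁻¹g)` with `u = (x − ⟪g, (Ω−z)⁻¹ξ⟫)/(ε − z − Σ_g(z))`. -/
theorem friedrichsLee_resolvent [CompleteSpace H]
    (Ω : H →ₗ.[ℂ] H) (hΩ : IsSelfAdjoint Ω) (ε : ℝ) (g : H)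
    (z : ℂ) (hz : z.im ≠ 0) (R : H → H) (hR : IsResolventAt Ω z R)
    (hne : (ε : ℂ) - z - ⟪g, R g⟫ ≠ 0) :
    Function.Bijective (fun p : (FriedrichsLee Ω ε g).domain =>
      (FriedrichsLee Ω ε g p : WithLp 2 (ℂ × H)) - z • (p : WithLp 2 (ℂ × H))) ∧
    ∀ q : WithLp 2 (ℂ × H),
      ∃ hp : (WithLp.equiv 2 (ℂ × H)).symm
          ((q.fst - ⟪g, R q.snd⟫) / ((ε : ℂ) - z - ⟪g, R g⟫),
            R q.snd - ((q.fst - ⟪g, R q.snd⟫) / ((ε : ℂ) - z - ⟪g, R g⟫)) • R g)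
        ∈ (FriedrichsLee Ω ε g).domain,
      (FriedrichsLee Ω ε g ⟨_, hp⟩ : WithLp 2 (ℂ × H)) -
          z • ((WithLp.equiv 2 (ℂ × H)).symm
            ((q.fst - ⟪g, R q.snd⟫) / ((ε : ℂ) - z - ⟪g, R g⟫),
              R q.snd - ((q.fst - ⟪g, R q.snd⟫) / ((ε : ℂ) - z - ⟪g, R g⟫)) • R g))
        = q :=
  friedrichsLee_resolvent_general Ω ε g z R hR hne

end
end

section
/- Let Ω be self-adjoint on H, ε ∈ ℝ, g ∈ H, g ≠ 0, and H_{g,ε} the Friedrichs-Lee operator on ℂ ⊕ H. Let Ψ₀ = (1, 0) ∈ ℂ ⊕ H. Then the orthogonal complement of the cyclic subspace generated by Ψ₀ under H_{g,ε} equals {0} ⊕ H_g^⊥, where H_g is the cyclic subspace generated by g under Ω. In particular, if g is a cyclic vector for Ω, then Ψ₀ is a cyclic vector for H_{g,ε}. -/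
/-! The resolvent of the Friedrichs–Lee operator at `Ψ₀ = (1, 0)` is a nonzero multiple of
`(1, -(Ω - z)⁻¹ g)`, so `p = (a, ξ)` is orthogonal to the cyclic subspace of `Ψ₀` iff
`a = ⟪(Ω - z)⁻¹ g, ξ⟫` for every nonreal `z`. For symmetric `Ω` one has
`‖(Ω - i t)⁻¹‖ ≤ 1 / t`; letting `t → ∞` forces `a = 0`, and then the condition says exactly
that `ξ` is orthogonal to the cyclic subspace of `g`. -/
open Complex InnerProductSpace

noncomputable section

local notation "⟪" x ", " y "⟫" => @inner ℂ _ _ x y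

variable {H : Type*} [NormedAddCommGroup H] [InnerProductSpace ℂ H]

/-- The cyclic subspace spanned by `φ`: the closure of the span of the resolvent
orbit `{(T−z)⁻¹ φ : z ∈ ℂ \ ℝ}` (the resolvents being encoded by `R`). -/
def cyclicSubspace {E : Type*} [NormedAddCommGroup E] [InnerProductSpace ℂ E]
    (R : ℂ → E → E) (φ : E) : Submodule ℂ E :=
  (Submodule.span ℂ {w | ∃ z : ℂ, z.im ≠ 0 ∧ w = R z φ}).topologicalClosure

theorem Submodule.mem_orthogonal_span_iff {𝕜 E : Type*} [RCLike 𝕜] [NormedAddCommGroup E]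
    [InnerProductSpace 𝕜 E] (s : Set E) (p : E) :
    p ∈ (Submodule.span 𝕜 s)ᗮ ↔ ∀ u ∈ s, inner 𝕜 u p = 0 := by
  refine ⟨fun hp u hu => Submodule.inner_right_of_mem_orthogonal (Submodule.subset_span hu) hp,
    fun h u hu => ?_⟩
  induction hu using Submodule.span_induction with
  | mem w hw => exact h w hw
  | zero => exact inner_zero_left p
  | add a b _ _ ha hb => rw [inner_add_left, ha, hb, add_zero]
  | smul c a _ ha => rw [inner_smul_left, ha, mul_zero]

theorem mem_orthogonal_cyclicSubspace_iff (R : ℂ → H → H) (φ p : H) :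
    p ∈ (cyclicSubspace R φ)ᗮ ↔ ∀ z : ℂ, z.im ≠ 0 → ⟪R z φ, p⟫ = 0 := by
  rw [cyclicSubspace, Submodule.orthogonal_closure, Submodule.mem_orthogonal_span_iff]
  exact ⟨fun h z hz => h _ ⟨z, hz, rfl⟩, fun h _ ⟨z, hz, hw⟩ => hw ▸ h z hz⟩

theorem IsSelfAdjoint.isFormalAdjoint [CompleteSpace H] {A : H →ₗ.[ℂ] H}
    (hA : IsSelfAdjoint A) : A.IsFormalAdjoint A := by
  have h := LinearPMap.adjoint_isFormalAdjoint hA.dense_domain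
  rwa [LinearPMap.isSelfAdjoint_def.mp hA] at h

namespace IsResolventAt

variable {A : H →ₗ.[ℂ] H} {z : ℂ} {R : H → H}

theorem apply_eq (hR : IsResolventAt A z R) {u v : H} (hu : u ∈ A.domain)
    (h : (A ⟨u, hu⟩ : H) - z • u = v) : R v = u :=
  h ▸ hR.2 u hu

theorem map_smul (hR : IsResolventAt A z R) (c : ℂ) (v : H) : R (c • v) = c • R v := by
  obtain ⟨hv, hAv⟩ := hR.1 v
  refine hR.apply_eq (A.domain.smul_mem c hv) ?_
  conv_rhs => rw [← hAv]
  rw [smul_sub, smul_comm z c]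
  congr 1
  exact A.map_smul c ⟨R v, hv⟩

theorem abs_im_mul_norm_apply_le (hA : A.IsFormalAdjoint A) (hR : IsResolventAt A z R) (v : H) :
    |z.im| * ‖R v‖ ≤ ‖v‖ := by
  obtain ⟨hu, hAu⟩ := hR.1 v
  set u := R v
  have hreal : (⟪u, (A ⟨u, hu⟩ : H)⟫).im = 0 :=
    Complex.conj_eq_iff_im.mp ((inner_conj_symm _ _).trans (hA ⟨u, hu⟩ ⟨u, hu⟩))
  have him : (⟪u, v⟫).im = -(z.im * ‖u‖ ^ 2) := by
    rw [← hAu, inner_sub_right, inner_smul_right, inner_self_eq_norm_sq_to_K, Complex.sub_im,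
      hreal]
    simp [Complex.mul_im, ← Complex.ofReal_pow]
  have hsq : |z.im| * ‖u‖ * ‖u‖ ≤ ‖v‖ * ‖u‖ :=
    calc |z.im| * ‖u‖ * ‖u‖ = |(⟪u, v⟫).im| := by rw [him, abs_neg, abs_mul, abs_sq]; ring
      _ ≤ ‖⟪u, v⟫‖ := Complex.abs_im_le_norm _
      _ ≤ ‖v‖ * ‖u‖ := (norm_inner_le_norm u v).trans_eq (mul_comm _ _)
  rcases (norm_nonneg u).eq_or_lt with hu0 | hu0
  · rw [← hu0, mul_zero]; exact norm_nonneg v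
  · exact le_of_mul_le_mul_right hsq hu0

end IsResolventAt

theorem eq_zero_of_forall_eq_inner_resolvent {A : H →ₗ.[ℂ] H} (hA : A.IsFormalAdjoint A)
    {R : ℂ → H → H} (hR : ∀ z : ℂ, z.im ≠ 0 → IsResolventAt A z (R z)) {a : ℂ} {v w : H}
    (h : ∀ z : ℂ, z.im ≠ 0 → a = ⟪R z v, w⟫) : a = 0 := by
  have hbound : ∀ t : ℝ, 0 < t → ‖a‖ ≤ ‖v‖ * ‖w‖ / t := by
    intro t ht
    have hz : ((t : ℂ) * I).im ≠ 0 := by simpa using ht.ne'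
    have hRv := (hR _ hz).abs_im_mul_norm_apply_le hA v
    rw [show ((t : ℂ) * I).im = t by simp, abs_of_pos ht] at hRv
    rw [le_div_iff₀ ht, h _ hz]
    calc ‖⟪R _ v, w⟫‖ * t ≤ ‖R ((t : ℂ) * I) v‖ * ‖w‖ * t := by
          gcongr; exact norm_inner_le_norm _ _
      _ = t * ‖R ((t : ℂ) * I) v‖ * ‖w‖ := by ring
      _ ≤ ‖v‖ * ‖w‖ := by gcongr
  have hlim : Filter.Tendsto (fun t : ℝ => ‖v‖ * ‖w‖ / t) Filter.atTop (nhds 0) :=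
    tendsto_const_nhds.div_atTop Filter.tendsto_id
  exact norm_le_zero_iff.mp <| ge_of_tendsto hlim <|
    Filter.eventually_atTop.mpr ⟨1, fun t ht => hbound t (by linarith)⟩

theorem friedrichsLee_apply (Ω : H →ₗ.[ℂ] H) (ε : ℝ) (g : H) (u : WithLp 2 (ℂ × H))
    (hu : u.snd ∈ Ω.domain) :
    (FriedrichsLee Ω ε g ⟨u, hu⟩ : WithLp 2 (ℂ × H)) =
      WithLp.toLp 2 ((ε : ℂ) * u.fst + ⟪g, u.snd⟫, u.fst • g + (Ω ⟨u.snd, hu⟩ : H)) :=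
  rfl

section FriedrichsLee

variable {Ω : H →ₗ.[ℂ] H} {ε : ℝ} {g : H} {z : ℂ} {RΩ : H → H}
  {RFL : WithLp 2 (ℂ × H) → WithLp 2 (ℂ × H)}

theorem resolvent_vacuum_eq_smul (hRΩ : IsResolventAt Ω z RΩ)
    (hRFL : IsResolventAt (FriedrichsLee Ω ε g) z RFL) :
    ∃ c : ℂ, c ≠ 0 ∧ RFL ((WithLp.equiv 2 (ℂ × H)).symm ((1 : ℂ), (0 : H))) =
      c • WithLp.toLp 2 ((1 : ℂ), -RΩ g) := by
  obtain ⟨hu, hAu⟩ := hRFL.1 ((WithLp.equiv 2 (ℂ × H)).symm ((1 : ℂ), (0 : H)))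
  set u := RFL ((WithLp.equiv 2 (ℂ × H)).symm ((1 : ℂ), (0 : H)))
  have hu' : u.snd ∈ Ω.domain := hu
  rw [friedrichsLee_apply Ω ε g u hu'] at hAu
  have hfst : (ε : ℂ) * u.fst + ⟪g, u.snd⟫ - z * u.fst = 1 := congrArg WithLp.fst hAu
  have hsnd : (Ω ⟨u.snd, hu'⟩ : H) - z • u.snd = -(u.fst • g) :=
    eq_neg_of_add_eq_zero_right ((add_sub_assoc _ _ _).symm.trans (congrArg WithLp.snd hAu))
  have hsnd_eq : u.snd = -u.fst • RΩ g := by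
    rw [← hRΩ.apply_eq hu' hsnd, ← neg_smul, hRΩ.map_smul]
  have hne : u.fst ≠ 0 := by
    intro h0
    rw [hsnd_eq, h0] at hfst
    simp at hfst
  refine ⟨u.fst, hne, (WithLp.ext_iff 2).2 (Prod.ext ?_ ?_)⟩
  · simp
  · simp [hsnd_eq]

theorem inner_resolvent_vacuum_eq_zero_iff (hRΩ : IsResolventAt Ω z RΩ)
    (hRFL : IsResolventAt (FriedrichsLee Ω ε g) z RFL) (p : WithLp 2 (ℂ × H)) :
    ⟪RFL ((WithLp.equiv 2 (ℂ × H)).symm ((1 : ℂ), (0 : H))), p⟫ = 0 ↔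
      p.fst = ⟪RΩ g, p.snd⟫ := by
  obtain ⟨c, hc, hRFLΨ₀⟩ := resolvent_vacuum_eq_smul hRΩ hRFL
  rw [hRFLΨ₀, inner_smul_left, mul_eq_zero, WithLp.prod_inner_apply]
  simp [hc, inner_neg_left, sub_eq_zero, ← sub_eq_add_neg]

end FriedrichsLee

theorem mem_orthogonal_cyclicSubspace_vacuum_iff {Ω : H →ₗ.[ℂ] H} (hΩ : Ω.IsFormalAdjoint Ω)
    {ε : ℝ} {g : H} {RΩ : ℂ → H → H} (hRΩ : ∀ z : ℂ, z.im ≠ 0 → IsResolventAt Ω z (RΩ z))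
    {RFL : ℂ → WithLp 2 (ℂ × H) → WithLp 2 (ℂ × H)}
    (hRFL : ∀ z : ℂ, z.im ≠ 0 → IsResolventAt (FriedrichsLee Ω ε g) z (RFL z))
    (p : WithLp 2 (ℂ × H)) :
    p ∈ (cyclicSubspace RFL ((WithLp.equiv 2 (ℂ × H)).symm ((1 : ℂ), (0 : H))))ᗮ ↔
      p.fst = 0 ∧ p.snd ∈ (cyclicSubspace RΩ g)ᗮ := by
  simp only [mem_orthogonal_cyclicSubspace_iff]
  rw [forall₂_congr fun z hz => inner_resolvent_vacuum_eq_zero_iff (hRΩ z hz) (hRFL z hz) p]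
  constructor
  · intro h
    have hfst : p.fst = 0 := eq_zero_of_forall_eq_inner_resolvent hΩ hRΩ h
    exact ⟨hfst, fun z hz => (h z hz).symm.trans hfst⟩
  · rintro ⟨hfst, hsnd⟩ z hz
    rw [hfst, hsnd z hz]

theorem cyclic_vacuum_friedrichsLee_general [CompleteSpace H]
    (Ω : H →ₗ.[ℂ] H) (hΩ : IsSelfAdjoint Ω) (ε : ℝ) (g : H)
    (RΩ : ℂ → H → H) (hRΩ : ∀ z : ℂ, z.im ≠ 0 → IsResolventAt Ω z (RΩ z))
    (RFL : ℂ → WithLp 2 (ℂ × H) → WithLp 2 (ℂ × H))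
    (hRFL : ∀ z : ℂ, z.im ≠ 0 → IsResolventAt (FriedrichsLee Ω ε g) z (RFL z)) :
    (∀ p : WithLp 2 (ℂ × H),
      p ∈ (cyclicSubspace RFL ((WithLp.equiv 2 (ℂ × H)).symm ((1 : ℂ), (0 : H))))ᗮ ↔
        p.fst = 0 ∧ p.snd ∈ (cyclicSubspace RΩ g)ᗮ) ∧
    (cyclicSubspace RΩ g = ⊤ →
      cyclicSubspace RFL ((WithLp.equiv 2 (ℂ × H)).symm ((1 : ℂ), (0 : H))) = ⊤) := by
  have horth := mem_orthogonal_cyclicSubspace_vacuum_iff hΩ.isFormalAdjoint hRΩ hRFL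
  refine ⟨horth, fun htop => ?_⟩
  have : CompleteSpace (cyclicSubspace RFL ((WithLp.equiv 2 (ℂ × H)).symm ((1 : ℂ), (0 : H)))) :=
    (Submodule.isClosed_topologicalClosure _).completeSpace_coe
  rw [← Submodule.orthogonal_eq_bot_iff, Submodule.eq_bot_iff]
  intro p hp
  rw [horth, htop, Submodule.top_orthogonal_eq_bot, Submodule.mem_bot] at hp
  exact (WithLp.ext_iff 2).2 (Prod.ext hp.1 hp.2)

/-- the orthogonal complement of the cyclic subspace generated by
`Ψ₀ = (1,0)` under the Friedrichs-Lee operator `H_{g,ε}` (with `g ≠ 0`) equals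
`{0} ⊕ H_g^⊥`, where `H_g` is the cyclic subspace generated by `g` under `Ω`;
in particular if `g` is cyclic for `Ω` then `Ψ₀` is cyclic for `H_{g,ε}`. -/
theorem cyclic_vacuum_friedrichsLee [CompleteSpace H]
    (Ω : H →ₗ.[ℂ] H) (hΩ : IsSelfAdjoint Ω) (ε : ℝ) (g : H) (hg : g ≠ 0)
    (RΩ : ℂ → H → H) (hRΩ : ∀ z : ℂ, z.im ≠ 0 → IsResolventAt Ω z (RΩ z))
    (RFL : ℂ → WithLp 2 (ℂ × H) → WithLp 2 (ℂ × H))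
    (hRFL : ∀ z : ℂ, z.im ≠ 0 → IsResolventAt (FriedrichsLee Ω ε g) z (RFL z)) :
    (∀ p : WithLp 2 (ℂ × H),
      p ∈ (cyclicSubspace RFL ((WithLp.equiv 2 (ℂ × H)).symm ((1 : ℂ), (0 : H))))ᗮ ↔
        p.fst = 0 ∧ p.snd ∈ (cyclicSubspace RΩ g)ᗮ) ∧
    (cyclicSubspace RΩ g = ⊤ →
      cyclicSubspace RFL ((WithLp.equiv 2 (ℂ × H)).symm ((1 : ℂ), (0 : H))) = ⊤) :=
  cyclic_vacuum_friedrichsLee_general Ω hΩ ε g RΩ hRΩ RFL hRFL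

end
end

section
/- Let Ψ₀ = (1,0) ∈ ℂ ⊕ H and H_{g,ε} the Friedrichs-Lee operator with g ∈ H. For z ∈ ℂ \ ℝ with ε − z − Σ_g(z) ≠ 0, the expectation value of the resolvent satisfies ⟨Ψ₀, (H_{g,ε}−z)⁻¹ Ψ₀⟩ = 1/(ε − z − Σ_g(z)), where Σ_g(z) = ⟨g, (Ω−z)⁻¹ g⟩. -/
/-! The second component of `(H_{g,ε} - z) p = (1, 0)` reads `(Ω - z) p₂ = -p₁ g`. A symmetric
operator has no non-real eigenvalues, so `Ω - z` is injective and `p₂ = -p₁ (Ω - z)⁻¹ g`.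
Substituting this into the first component gives `p₁ (ε - z - Σ_g(z)) = 1`, and
`⟪Ψ₀, p⟫ = p₁`. -/

open Complex InnerProductSpace

noncomputable section

local notation "⟪" x ", " y "⟫" => @inner ℂ _ _ x y

variable {H : Type*} [NormedAddCommGroup H] [InnerProductSpace ℂ H]

namespace LinearPMap

variable {𝕜 E : Type*} [RCLike 𝕜] [NormedAddCommGroup E] [InnerProductSpace 𝕜 E]

theorem _root_.IsSelfAdjoint.isFormalAdjoint_s12 [CompleteSpace E] {T : E →ₗ.[𝕜] E}
    (hT : IsSelfAdjoint T) : T.IsFormalAdjoint T := by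
  have h := adjoint_isFormalAdjoint hT.dense_domain
  rwa [isSelfAdjoint_def.mp hT] at h

variable {T : E →ₗ.[𝕜] E} {z : 𝕜}

-- `⟪T v, v⟫ = ⟪v, T v⟫` forces `conj z ‖v‖² = z ‖v‖²`.
theorem IsFormalAdjoint.eq_zero_of_apply_eq_smul (hT : T.IsFormalAdjoint T)
    (hz : RCLike.im z ≠ 0) (v : T.domain) (hv : T v = z • (v : E)) : (v : E) = 0 := by
  have hsym := hT v v
  rw [hv, inner_smul_left, inner_smul_right] at hsym
  have hconj : (starRingEnd 𝕜) z ≠ z := fun h => hz (RCLike.conj_eq_iff_im.mp h)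
  by_contra hv0
  exact hconj (mul_right_cancel₀ (inner_self_ne_zero.mpr hv0) hsym)

theorem IsFormalAdjoint.eq_of_apply_sub_smul_eq (hT : T.IsFormalAdjoint T)
    (hz : RCLike.im z ≠ 0) {v w : T.domain}
    (h : T v - z • (v : E) = T w - z • (w : E)) : (v : E) = w := by
  have hdiff : T (v - w) = z • ((v - w : T.domain) : E) := by
    rw [T.map_sub, Submodule.coe_sub, smul_sub]
    linear_combination (norm := module) h
  exact sub_eq_zero.mp (hT.eq_zero_of_apply_eq_smul hz (v - w) hdiff)

end LinearPMap

section FriedrichsLee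

variable (Ω : H →ₗ.[ℂ] H) (ε : ℝ) (g : H)

theorem friedrichsLee_sub_smul_eq_iff {p : WithLp 2 (ℂ × H)}
    (hp : p ∈ (FriedrichsLee Ω ε g).domain) (z : ℂ) (w : WithLp 2 (ℂ × H)) :
    FriedrichsLee Ω ε g ⟨p, hp⟩ - z • p = w ↔
      ε * p.fst + ⟪g, p.snd⟫ - z * p.fst = w.fst ∧
        p.fst • g + Ω ⟨p.snd, hp⟩ - z • p.snd = w.snd := by
  rw [WithLp.ext_iff, Prod.ext_iff]
  rfl

end FriedrichsLee

theorem friedrichsLee_vacuum_expectation_general [CompleteSpace H]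
    (Ω : H →ₗ.[ℂ] H) (hΩ : IsSelfAdjoint Ω) (ε : ℝ) (g : H)
    (z : ℂ) (hz : z.im ≠ 0)
    (u : H) (hu : u ∈ Ω.domain) (hres : (Ω ⟨u, hu⟩ : H) - z • u = g)
    (p : WithLp 2 (ℂ × H)) (hp : p ∈ (FriedrichsLee Ω ε g).domain)
    (hpres : (FriedrichsLee Ω ε g ⟨p, hp⟩ : WithLp 2 (ℂ × H)) - z • p
      = (WithLp.equiv 2 (ℂ × H)).symm ((1 : ℂ), (0 : H))) :
    ⟪(WithLp.equiv 2 (ℂ × H)).symm ((1 : ℂ), (0 : H)), p⟫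
      = ((ε : ℂ) - z - ⟪g, u⟫)⁻¹ := by
  obtain ⟨hfst, hsnd⟩ := (friedrichsLee_sub_smul_eq_iff Ω ε g hp z _).mp hpres
  simp only [WithLp.equiv_symm_apply, WithLp.toLp_fst, WithLp.toLp_snd] at hfst hsnd
  have hp_snd : p.snd = -(p.fst • u) :=
    hΩ.isFormalAdjoint_s12.eq_of_apply_sub_smul_eq hz
      (v := ⟨p.snd, hp⟩) (w := -(p.fst • ⟨u, hu⟩)) <| by
      rw [Ω.map_neg, Ω.map_smul, Submodule.coe_neg, Submodule.coe_smul]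
      linear_combination (norm := module) hsnd + p.fst • hres
  have hp_fst : p.fst = ((ε : ℂ) - z - ⟪g, u⟫)⁻¹ := by
    refine eq_inv_of_mul_eq_one_left ?_
    rw [hp_snd, inner_neg_right, inner_smul_right] at hfst
    linear_combination hfst
  simp [WithLp.prod_inner_apply, hp_fst]

/-- for `Ψ₀ = (1,0)` and `z ∉ ℝ` with `ε − z − Σ_g(z) ≠ 0`, the
expectation value of the resolvent of the Friedrichs-Lee operator satisfies
`⟪Ψ₀, (H_{g,ε} − z)⁻¹ Ψ₀⟫ = 1/(ε − z − Σ_g(z))`, with `Σ_g(z) = ⟪g, (Ω−z)⁻¹g⟫`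
(`u = (Ω−z)⁻¹g` and `p = (H_{g,ε}−z)⁻¹Ψ₀` characterised by the resolvent equations). -/
theorem friedrichsLee_vacuum_expectation [CompleteSpace H]
    (Ω : H →ₗ.[ℂ] H) (hΩ : IsSelfAdjoint Ω) (ε : ℝ) (g : H)
    (z : ℂ) (hz : z.im ≠ 0)
    (u : H) (hu : u ∈ Ω.domain) (hres : (Ω ⟨u, hu⟩ : H) - z • u = g)
    (hne : (ε : ℂ) - z - ⟪g, u⟫ ≠ 0)
    (p : WithLp 2 (ℂ × H)) (hp : p ∈ (FriedrichsLee Ω ε g).domain)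
    (hpres : (FriedrichsLee Ω ε g ⟨p, hp⟩ : WithLp 2 (ℂ × H)) - z • p
      = (WithLp.equiv 2 (ℂ × H)).symm ((1 : ℂ), (0 : H))) :
    ⟪(WithLp.equiv 2 (ℂ × H)).symm ((1 : ℂ), (0 : H)), p⟫
      = ((ε : ℂ) - z - ⟪g, u⟫)⁻¹ :=
  friedrichsLee_vacuum_expectation_general Ω hΩ ε g z hz u hu hres p hp hpres

end
end

section
/- For the Friedrichs-Lee model with coupling measure equal to (β/2π) times Lebesgue measure on ℝ (β > 0), the self-energy satisfies Σ(z) = iβ/2 for Im z > 0; explicitly, for every z with Im z > 0, ∫_ℝ (1/(λ−z) − λ/(1+λ²)) (β/2π) dλ = iβ/2. -/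
/-!
Since `t / (1 + t²) = (t - i)⁻¹ - i / (1 + t²)`, the integrand is
`(t - z)⁻¹ - (t - i)⁻¹ + i / (1 + t²)`. The difference of resolvents has the primitive
`log ((t - z) / (t - i))`, which is well defined because `z` and `i` lie in the same half-plane,
and which tends to `log 1 = 0` at both ends of the real line. Only `∫ i / (1 + t²) = iπ` survives.
-/

open MeasureTheory Complex Filter Topology

lemma div_mem_slitPlane_of_im_mul_pos {a b : ℂ} (h : 0 < a.im * b.im) : a / b ∈ slitPlane := by
  have hnb : 0 < normSq b := normSq_pos.2 (by rintro rfl; simp at h)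
  rw [mem_slitPlane_iff, or_iff_not_imp_right, not_not, div_re, div_im, ← add_div]
  intro him
  rw [sub_eq_zero, div_left_inj' hnb.ne'] at him
  have hprod : (a.re * b.re + a.im * b.im) * (a.im * b.im)
      = (a.im * b.re) ^ 2 + (a.im * b.im) ^ 2 := by
    linear_combination (-(a.im * b.re)) * him
  refine div_pos ((mul_pos_iff_of_pos_right h).1 ?_) hnb
  rw [hprod]
  positivity

lemma ofReal_sub_ne_zero {z : ℂ} (hz : z.im ≠ 0) (t : ℝ) : (t : ℂ) - z ≠ 0 := fun h =>
  hz (by simpa using congrArg im h)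

lemma norm_inv_sub_inv_le {𝕜 : Type*} [NormedField 𝕜] {a b : 𝕜} (ha : a ≠ 0) (hb : b ≠ 0) :
    ‖a⁻¹ - b⁻¹‖ ≤ ‖a - b‖ / 2 * (‖a‖⁻¹ ^ 2 + ‖b‖⁻¹ ^ 2) := by
  rw [inv_sub_inv' ha hb, norm_mul, norm_mul, norm_inv, norm_inv, norm_sub_rev b a]
  nlinarith [two_mul_le_add_sq ‖a‖⁻¹ ‖b‖⁻¹, norm_nonneg (a - b)]

lemma integrable_inv_norm_ofReal_sub_sq {z : ℂ} (hz : z.im ≠ 0) :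
    Integrable fun t : ℝ => ‖(t : ℂ) - z‖⁻¹ ^ 2 := by
  have hnorm : ∀ t : ℝ,
      ‖(t : ℂ) - z‖⁻¹ ^ 2 = (z.im ^ 2)⁻¹ * (1 + ((t - z.re) / z.im) ^ 2)⁻¹ := by
    intro t
    rw [inv_pow, Complex.sq_norm, Complex.normSq_apply, ← mul_inv]
    congr 1
    simp only [sub_re, ofReal_re, sub_im, ofReal_im]
    field_simp
    ring
  simp_rw [hnorm]
  exact ((integrable_inv_one_add_sq.comp_div hz).comp_sub_right z.re).const_mul _

lemma integrable_inv_ofReal_sub_sub_inv_ofReal_sub {z w : ℂ} (hz : z.im ≠ 0) (hw : w.im ≠ 0) :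
    Integrable fun t : ℝ => ((t : ℂ) - z)⁻¹ - ((t : ℂ) - w)⁻¹ := by
  refine (((integrable_inv_norm_ofReal_sub_sq hz).add
    (integrable_inv_norm_ofReal_sub_sq hw)).const_mul (‖w - z‖ / 2)).mono' ?_ ?_
  · exact (((continuous_ofReal.sub continuous_const).inv₀ (ofReal_sub_ne_zero hz)).sub
      ((continuous_ofReal.sub continuous_const).inv₀ (ofReal_sub_ne_zero hw))).aestronglyMeasurable
  · refine Eventually.of_forall fun t => ?_
    simpa [sub_sub_sub_cancel_left] using
      norm_inv_sub_inv_le (ofReal_sub_ne_zero hz t) (ofReal_sub_ne_zero hw t)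

lemma tendsto_sub_div_sub_cobounded (z w : ℂ) :
    Tendsto (fun u : ℂ => (u - z) / (u - w)) (Bornology.cobounded ℂ) (𝓝 1) := by
  have hinv : Tendsto (fun u : ℂ => (u - w)⁻¹) (Bornology.cobounded ℂ) (𝓝 0) :=
    tendsto_inv₀_cobounded.comp (tendsto_sub_const_cobounded w)
  have := (hinv.const_mul (w - z)).const_add 1
  rw [mul_zero, add_zero] at this
  refine this.congr' ?_
  filter_upwards [Bornology.eventually_ne_cobounded w] with u hu
  field_simp [sub_ne_zero.2 hu]
  ring

lemma hasDerivAt_log_ofReal_sub_div_ofReal_sub {z w : ℂ} (h : 0 < z.im * w.im) (t : ℝ) :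
    HasDerivAt (fun t : ℝ => log (((t : ℂ) - z) / ((t : ℂ) - w)))
      (((t : ℂ) - z)⁻¹ - ((t : ℂ) - w)⁻¹) t := by
  have hz : (t : ℂ) - z ≠ 0 := ofReal_sub_ne_zero (left_ne_zero_of_mul h.ne') t
  have hw : (t : ℂ) - w ≠ 0 := ofReal_sub_ne_zero (right_ne_zero_of_mul h.ne') t
  have hmem : ((t : ℂ) - z) / ((t : ℂ) - w) ∈ slitPlane :=
    div_mem_slitPlane_of_im_mul_pos (by simpa [neg_mul_neg] using h)
  have hsub : ∀ c : ℂ, HasDerivAt (fun t : ℝ => (t : ℂ) - c) 1 t := fun c =>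
    (ofRealCLM.hasDerivAt (x := t)).sub_const c
  refine (((hsub z).div (hsub w) hw).clog_real hmem).congr_deriv ?_
  simp only [Pi.div_apply]
  field_simp

lemma integral_inv_ofReal_sub_sub_inv_ofReal_sub {z w : ℂ} (h : 0 < z.im * w.im) :
    ∫ t : ℝ, (((t : ℂ) - z)⁻¹ - ((t : ℂ) - w)⁻¹) = 0 := by
  have hlim : ∀ l : Filter ℝ, Tendsto (fun t : ℝ => (t : ℂ)) l (Bornology.cobounded ℂ) →
      Tendsto (fun t : ℝ => log (((t : ℂ) - z) / ((t : ℂ) - w))) l (𝓝 0) := fun l hl => by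
    simpa [Function.comp_def] using ((continuousAt_clog one_mem_slitPlane).tendsto.comp
      ((tendsto_sub_div_sub_cobounded z w).comp hl))
  simpa using integral_of_hasDerivAt_of_tendsto (hasDerivAt_log_ofReal_sub_div_ofReal_sub h)
    (integrable_inv_ofReal_sub_sub_inv_ofReal_sub (left_ne_zero_of_mul h.ne')
      (right_ne_zero_of_mul h.ne'))
    (hlim _ (RCLike.tendsto_ofReal_atBot_cobounded ℂ))
    (hlim _ (RCLike.tendsto_ofReal_atTop_cobounded ℂ))

lemma ofReal_div_one_add_sq (t : ℝ) :
    (t : ℂ) / (1 + (t : ℂ) ^ 2) = ((t : ℂ) - I)⁻¹ - I * (((1 + t ^ 2)⁻¹ : ℝ) : ℂ) := by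
  have ht : (t : ℂ) - I ≠ 0 := ofReal_sub_ne_zero (by simp) t
  have ht' : (1 : ℂ) + (t : ℂ) ^ 2 ≠ 0 := by exact_mod_cast (by positivity : (1 + t ^ 2 : ℝ) ≠ 0)
  push_cast
  field_simp
  linear_combination -I_sq

theorem selfEnergy_flat_coupling_general (β : ℝ) :
    ∀ z : ℂ, 0 < z.im →
      ∫ t : ℝ, (β / (2 * Real.pi) : ℂ) *
          (((t : ℂ) - z)⁻¹ - (t : ℂ) / (1 + (t : ℂ) ^ 2))
        = Complex.I * β / 2 := by
  intro z hz
  have hzI : 0 < z.im * I.im := by simpa using hz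
  have hcauchy : Integrable fun t : ℝ => I * (((1 + t ^ 2)⁻¹ : ℝ) : ℂ) :=
    integrable_inv_one_add_sq.ofReal.const_mul I
  simp_rw [ofReal_div_one_add_sq, sub_sub_eq_add_sub, add_sub_right_comm]
  rw [integral_const_mul,
    integral_add (integrable_inv_ofReal_sub_sub_inv_ofReal_sub hz.ne' (by simp)) hcauchy,
    integral_inv_ofReal_sub_sub_inv_ofReal_sub hzI, integral_const_mul, integral_complex_ofReal,
    integral_univ_inv_one_add_sq, zero_add]
  field_simp

/-- for the flat coupling measure `(β/2π)·Lebesgue` on `ℝ` (`β > 0`),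
the self-energy equals `iβ/2` on the upper half-plane:
`∫ (1/(λ−z) − λ/(1+λ²)) (β/2π) dλ = iβ/2` for every `z` with `Im z > 0`. -/
theorem selfEnergy_flat_coupling (β : ℝ) (hβ : 0 < β) :
    ∀ z : ℂ, 0 < z.im →
      ∫ t : ℝ, (β / (2 * Real.pi) : ℂ) *
          (((t : ℂ) - z)⁻¹ - (t : ℂ) / (1 + (t : ℂ) ^ 2))
        = Complex.I * β / 2 :=
  selfEnergy_flat_coupling_general β
end
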